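/- In ℂ² ⊗ (ℂ² ⊗ ℂ²), neither e₁⊗(e₁⊗e₁) nor e₂⊗(e₂⊗e₂) belongs to the two-dimensional subspace span{e₁⊗(e₁⊗e₁ + e₂⊗e₂), e₂⊗(e₁⊗e₁ − e₂⊗e₂)}; indeed, this subspace contains no nonzero vector of the form φ ⊗ (φ' ⊗ φ'') with φ, φ', φ'' ∈ ℂ². -/

import Mathlib

/-! Fixing the first index `i` of the coefficient array of `α • e₁ ⊗ (e₁ ⊗ e₁ + e₂ ⊗ e₂) +
β • e₂ ⊗ (e₁ ⊗ e₁ − e₂ ⊗ e₂)` gives the matrices `diag(α, α)` and `diag(β, -β)`, while every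
such slice of a product vector `x ⊗ (y ⊗ z)` is the rank-one matrix `xᵢ y zᵀ`. Hence both
determinants `α²` and `-β²` vanish, and the only product vector in the span is `0`. -/

open scoped TensorProduct

/-- The standard basis vectors of `ℂ²` (`e 0 = e₁`, `e 1 = e₂`). -/
noncomputable def e (i : Fin 2) : Fin 2 → ℂ := Pi.single i 1

/-- The space `ℂ² ⊗ (ℂ² ⊗ ℂ²)`. -/
abbrev Qubit3 := (Fin 2 → ℂ) ⊗[ℂ] ((Fin 2 → ℂ) ⊗[ℂ] (Fin 2 → ℂ))

/-- The right singular subspace, in the partition 1|234, of the four-qubit cluster state: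
`span{e₁⊗(e₁⊗e₁ + e₂⊗e₂), e₂⊗(e₁⊗e₁ − e₂⊗e₂)}`. -/
noncomputable def clusterRSS : Submodule ℂ Qubit3 :=
  Submodule.span ℂ
    {e 0 ⊗ₜ[ℂ] (e 0 ⊗ₜ[ℂ] e 0 + e 1 ⊗ₜ[ℂ] e 1),
     e 1 ⊗ₜ[ℂ] (e 0 ⊗ₜ[ℂ] e 0 - e 1 ⊗ₜ[ℂ] e 1)}

namespace Module.Basis

variable {R M N P ι κ μ : Type*} [CommSemiring R] [AddCommMonoid M] [Module R M]
  [AddCommMonoid N] [Module R N] [AddCommMonoid P] [Module R P]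

theorem tensorProduct_repr_tmul_tmul_mul_comm (b : Basis ι R M) (c : Basis κ R N)
    (d : Basis μ R P) (m : M) (n : N) (p : P) (i : ι) (j j' : κ) (k k' : μ) :
    (b.tensorProduct (c.tensorProduct d)).repr (m ⊗ₜ (n ⊗ₜ p)) (i, j, k) *
        (b.tensorProduct (c.tensorProduct d)).repr (m ⊗ₜ (n ⊗ₜ p)) (i, j', k') =
      (b.tensorProduct (c.tensorProduct d)).repr (m ⊗ₜ (n ⊗ₜ p)) (i, j, k') *
        (b.tensorProduct (c.tensorProduct d)).repr (m ⊗ₜ (n ⊗ₜ p)) (i, j', k) := by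
  simp only [tensorProduct_repr_tmul_apply, smul_eq_mul]
  ring

end Module.Basis

theorem e_tmul_e_tmul_e_ne_zero (i j k : Fin 2) : e i ⊗ₜ[ℂ] (e j ⊗ₜ[ℂ] e k) ≠ 0 := by
  let b := Pi.basisFun ℂ (Fin 2)
  simpa [b, e] using (b.tensorProduct (b.tensorProduct b)).ne_zero (i, j, k)

theorem tmul_tmul_eq_zero_of_mem_clusterRSS {x y z : Fin 2 → ℂ}
    (h : x ⊗ₜ[ℂ] (y ⊗ₜ[ℂ] z) ∈ clusterRSS) : x ⊗ₜ[ℂ] (y ⊗ₜ[ℂ] z) = 0 := by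
  obtain ⟨α, β, hαβ⟩ := Submodule.mem_span_pair.mp h
  let b := Pi.basisFun ℂ (Fin 2)
  have hα : α = 0 := by
    simpa [← hαβ, b, e] using b.tensorProduct_repr_tmul_tmul_mul_comm b b x y z 0 0 1 0 1
  have hβ : β = 0 := by
    simpa [← hαβ, b, e] using b.tensorProduct_repr_tmul_tmul_mul_comm b b x y z 1 0 1 0 1
  rw [← hαβ, hα, hβ, zero_smul, zero_smul, add_zero]

theorem cluster_subspace_contains_no_product_vector :
    e 0 ⊗ₜ[ℂ] (e 0 ⊗ₜ[ℂ] e 0) ∉ clusterRSS ∧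
    e 1 ⊗ₜ[ℂ] (e 1 ⊗ₜ[ℂ] e 1) ∉ clusterRSS ∧
    ∀ φ φ' φ'' : Fin 2 → ℂ,
      φ ⊗ₜ[ℂ] (φ' ⊗ₜ[ℂ] φ'') ∈ clusterRSS → φ ⊗ₜ[ℂ] (φ' ⊗ₜ[ℂ] φ'') = 0 :=
  ⟨fun h => e_tmul_e_tmul_e_ne_zero 0 0 0 (tmul_tmul_eq_zero_of_mem_clusterRSS h),
    fun h => e_tmul_e_tmul_e_ne_zero 1 1 1 (tmul_tmul_eq_zero_of_mem_clusterRSS h),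
    fun _ _ _ => tmul_tmul_eq_zero_of_mem_clusterRSS⟩
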